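/- Let n ≥ 1, let f : ℝ → ℂ be n times continuously differentiable, and let w : ℝ → ℂ be integrable with f^{(n)}(x) = ∫_ℝ w(t)·e^{ixt} dt for all x ∈ ℝ. Then for all pairwise distinct x₀,…,x_n ∈ ℝ one has f^{[n]}(x₀,…,x_n) = ∫_{T_n} ∫_ℝ w(t)·exp(i t (s₀x₀ + s₁x₁ + ⋯ + s_n x_n)) dt ds, where T_n := {(s₁,…,s_n) ∈ ℝ^n : s_j ≥ 0 for all j and Σ_{j=1}^n s_j ≤ 1} carries Lebesgue measure and s₀ := 1 − Σ_{j=1}^n s_j. -/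

import Mathlib

open MeasureTheory

/-- The `m`-th order divided difference of `f : ℝ → ℂ` at the `m+1` points `x 0, …, x m`,
given by the explicit symmetric formula (valid for pairwise distinct points). -/
noncomputable def divDiff {m : ℕ} (f : ℝ → ℂ) (x : Fin (m + 1) → ℝ) : ℂ :=
  ∑ j, f (x j) / ∏ k ∈ Finset.univ.erase j, ((x j : ℂ) - (x k : ℂ))

/-!
This is the Hermite–Genocchi formula `f^{[n]}(x) = ∫_{T_n} f⁽ⁿ⁾(s₀x₀ + ⋯ + sₙxₙ) ds` with the
Fourier representation of `f⁽ⁿ⁾` substituted in. The formula is proved by induction on `n`: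
slicing `T_{n+1}` along its first coordinate `a ∈ [0, 1 - Σ s]` and integrating `f⁽ⁿ⁺¹⁾` in `a`
by the fundamental theorem of calculus leaves `(x₁ - x₀)⁻¹` times the difference of the
`T_n`-integrals of `f⁽ⁿ⁾` for the nodes without `x₀` and without `x₁`, which is the recurrence
of divided differences.
-/

open Finset

section DividedDifference

lemma prod_erase_succAbove_mul {m : ℕ} (x : Fin (m + 2) → ℝ) (p : Fin (m + 2))
    (j : Fin (m + 1)) :
    (∏ k ∈ univ.erase j, ((x (p.succAbove j) : ℂ) - x (p.succAbove k))) *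
        ((x (p.succAbove j) : ℂ) - x p) =
      ∏ k ∈ univ.erase (p.succAbove j), ((x (p.succAbove j) : ℂ) - x k) := by
  have hp : p ∈ univ.erase (p.succAbove j) :=
    mem_erase.2 ⟨(Fin.succAbove_ne p j).symm, mem_univ p⟩
  have himage : (univ.erase (p.succAbove j)).erase p = (univ.erase j).image p.succAbove := by
    ext k
    simp only [mem_erase, mem_image, mem_univ, and_true]
    constructor
    · rintro ⟨hkp, hkj⟩
      obtain ⟨k', rfl⟩ := Fin.exists_succAbove_eq hkp
      exact ⟨k', fun h => hkj (h ▸ rfl), rfl⟩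
    · rintro ⟨k', hk'j, rfl⟩
      exact ⟨Fin.succAbove_ne p k', fun h => hk'j (Fin.succAbove_right_injective h)⟩
  rw [← mul_prod_erase _ _ hp, himage,
    prod_image fun _ _ _ _ h => Fin.succAbove_right_injective h, mul_comm]

lemma divDiff_comp_succAbove {m : ℕ} (f : ℝ → ℂ) {x : Fin (m + 2) → ℝ}
    (hx : Function.Injective x) (p : Fin (m + 2)) :
    divDiff f (x ∘ p.succAbove) =
      ∑ j, f (x j) * ((x j : ℂ) - x p) / ∏ k ∈ univ.erase j, ((x j : ℂ) - x k) := by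
  rw [Fin.sum_univ_succAbove _ p]
  simp only [sub_self, mul_zero, zero_div, zero_add]
  refine sum_congr rfl fun j _ => ?_
  have hne : ((x (p.succAbove j) : ℂ) - x p) ≠ 0 :=
    sub_ne_zero.2 <| Complex.ofReal_injective.ne <| hx.ne (Fin.succAbove_ne p j)
  rw [← prod_erase_succAbove_mul x p j, mul_div_mul_right _ _ hne]
  rfl

lemma divDiff_recurrence {m : ℕ} (f : ℝ → ℂ) {x : Fin (m + 2) → ℝ}
    (hx : Function.Injective x) :
    divDiff f (x ∘ Fin.succ) - divDiff f (x ∘ (1 : Fin (m + 2)).succAbove) =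
      ((x 1 : ℂ) - x 0) * divDiff f x := by
  rw [← Fin.succAbove_zero, divDiff_comp_succAbove f hx, divDiff_comp_succAbove f hx, divDiff,
    ← sum_sub_distrib, mul_sum]
  refine sum_congr rfl fun j _ => ?_
  ring

end DividedDifference

section Simplex

def cornerSimplex (ι : Type*) [Fintype ι] : Set (ι → ℝ) :=
  {s | (∀ j, 0 ≤ s j) ∧ ∑ j, s j ≤ 1}

variable {ι : Type*} [Fintype ι]

lemma isCompact_cornerSimplex : IsCompact (cornerSimplex ι) := by
  have hclosed : IsClosed (cornerSimplex ι) := by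
    refine IsClosed.inter ?_ <|
      isClosed_le (continuous_finsetSum _ fun j _ => continuous_apply j) continuous_const
    show IsClosed {s : ι → ℝ | ∀ j, 0 ≤ s j}
    rw [Set.ofPred_forall]
    exact isClosed_iInter fun j => isClosed_le continuous_const (continuous_apply j)
  refine Metric.isCompact_of_isClosed_isBounded hclosed <|
    (isCompact_univ_pi fun _ => isCompact_Icc (a := (0 : ℝ)) (b := 1)).isBounded.subset ?_
  rintro s ⟨hs0, hs1⟩ j -
  exact ⟨hs0 j, (single_le_sum (fun i _ => hs0 i) (mem_univ j)).trans hs1⟩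

lemma measurableSet_cornerSimplex : MeasurableSet (cornerSimplex ι) :=
  isCompact_cornerSimplex.isClosed.measurableSet

lemma cons_mem_cornerSimplex_iff {n : ℕ} (a : ℝ) (s : Fin n → ℝ) :
    (Fin.cons a s : Fin (n + 1) → ℝ) ∈ cornerSimplex (Fin (n + 1)) ↔
      s ∈ cornerSimplex (Fin n) ∧ a ∈ Set.Icc 0 (1 - ∑ j, s j) := by
  simp only [cornerSimplex, Set.mem_ofPred_eq, Fin.forall_fin_succ, Fin.sum_univ_succ,
    Fin.cons_zero, Fin.cons_succ, Set.mem_Icc]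
  constructor
  · rintro ⟨⟨ha, hs⟩, hsum⟩
    exact ⟨⟨hs, by linarith⟩, ha, by linarith⟩
  · rintro ⟨⟨hs, -⟩, ha, hsum⟩
    exact ⟨⟨ha, hs⟩, by linarith⟩

lemma setIntegral_cornerSimplex_succ {E : Type*} [NormedAddCommGroup E] [NormedSpace ℝ E]
    {n : ℕ} {F : (Fin (n + 1) → ℝ) → E} (hF : IntegrableOn F (cornerSimplex (Fin (n + 1)))) :
    ∫ s in cornerSimplex (Fin (n + 1)), F s =
      ∫ s in cornerSimplex (Fin n), ∫ a in 0..(1 - ∑ j, s j), F (Fin.cons a s) := by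
  set e := (MeasurableEquiv.piFinSuccAbove (fun _ : Fin (n + 1) => ℝ) 0).symm
  have he : MeasurePreserving e (volume.prod volume) volume :=
    (volume_preserving_piFinSuccAbove (fun _ : Fin (n + 1) => ℝ) 0).symm
  have hint : Integrable (fun z => (cornerSimplex (Fin (n + 1))).indicator F (e z))
      (volume.prod volume) :=
    (he.integrable_comp_emb e.measurableEmbedding).2 <|
      hF.integrable_indicator measurableSet_cornerSimplex
  rw [← integral_indicator measurableSet_cornerSimplex, ← he.integral_comp e.measurableEmbedding,
    integral_prod_symm _ hint, ← integral_indicator measurableSet_cornerSimplex]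
  congr 1 with s
  have he_apply (a : ℝ) : e (a, s) = Fin.cons a s := by
    simp only [e, MeasurableEquiv.piFinSuccAbove_symm_apply]
    exact Fin.insertNth_zero' a s
  simp only [he_apply]
  by_cases hs : s ∈ cornerSimplex (Fin n)
  · have hslice (a : ℝ) : (cornerSimplex (Fin (n + 1))).indicator F (Fin.cons a s) =
        (Set.Icc 0 (1 - ∑ j, s j)).indicator (fun a => F (Fin.cons a s)) a := by
      classical
      simp only [Set.indicator_apply, cons_mem_cornerSimplex_iff, hs, true_and]
    have hlen : 0 ≤ 1 - ∑ j, s j := sub_nonneg.2 hs.2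
    simp only [hslice, Set.indicator_of_mem hs, integral_indicator measurableSet_Icc,
      intervalIntegral.integral_of_le hlen, integral_Icc_eq_integral_Ioc]
  · have hslice (a : ℝ) : (cornerSimplex (Fin (n + 1))).indicator F (Fin.cons a s) = 0 :=
      Set.indicator_of_notMem (fun h => hs ((cons_mem_cornerSimplex_iff a s).1 h).1) _
    simp only [hslice, integral_zero, Set.indicator_of_notMem hs]

end Simplex

section HermiteGenocchi

def simplexPoint {n : ℕ} (x : Fin (n + 1) → ℝ) (s : Fin n → ℝ) : ℝ :=
  (1 - ∑ j, s j) * x 0 + ∑ j, s j * x j.succ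

lemma continuous_simplexPoint {n : ℕ} (x : Fin (n + 1) → ℝ) : Continuous (simplexPoint x) := by
  unfold simplexPoint
  fun_prop

lemma simplexPoint_cons {n : ℕ} (x : Fin (n + 2) → ℝ) (a : ℝ) (s : Fin n → ℝ) :
    simplexPoint x (Fin.cons a s) =
      simplexPoint (x ∘ (1 : Fin (n + 2)).succAbove) s + (x 1 - x 0) * a := by
  simp only [simplexPoint, Fin.sum_univ_succ, Fin.cons_zero, Fin.cons_succ, Function.comp_apply,
    ← Fin.succ_zero_eq_one, Fin.succ_succAbove_zero, Fin.succ_succAbove_succ, Fin.succAbove_zero]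
  ring

lemma simplexPoint_succAbove_one_add {n : ℕ} (x : Fin (n + 2) → ℝ) (s : Fin n → ℝ) :
    simplexPoint (x ∘ (1 : Fin (n + 2)).succAbove) s + (x 1 - x 0) * (1 - ∑ j, s j) =
      simplexPoint (x ∘ Fin.succ) s := by
  simp only [simplexPoint, Function.comp_apply, ← Fin.succ_zero_eq_one, Fin.succ_succAbove_zero,
    Fin.succ_succAbove_succ, Fin.succAbove_zero]
  ring

lemma intervalIntegral_comp_add_mul_of_hasDerivAt {E : Type*} [NormedAddCommGroup E]
    [NormedSpace ℝ E] [CompleteSpace E] {G g : ℝ → E} (hG : ∀ y, HasDerivAt G (g y) y)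
    (hg : Continuous g) {d : ℝ} (hd : d ≠ 0) (b c : ℝ) :
    ∫ a in 0..c, g (b + d * a) = d⁻¹ • (G (b + d * c) - G b) := by
  rw [intervalIntegral.integral_comp_add_mul g hd,
    intervalIntegral.integral_eq_sub_of_hasDerivAt (fun y _ => hG y) (hg.intervalIntegrable _ _),
    mul_zero, add_zero]

theorem divDiff_eq_setIntegral_iteratedDeriv (n : ℕ) {f : ℝ → ℂ} (hf : ContDiff ℝ n f)
    {x : Fin (n + 1) → ℝ} (hx : Function.Injective x) :
    divDiff f x = ∫ s in cornerSimplex (Fin n), iteratedDeriv n f (simplexPoint x s) := by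
  induction n with
  | zero =>
    have huniv : cornerSimplex (Fin 0) = Set.univ := by ext s; simp [cornerSimplex]
    simp [huniv, divDiff, simplexPoint, measureReal_def, volume_pi]
  | succ n ih =>
    have hd : x 1 - x 0 ≠ 0 := sub_ne_zero.2 (hx.ne (by simp))
    have hf' : ContDiff ℝ n f := hf.of_le (by exact_mod_cast n.le_succ)
    have hderiv (y : ℝ) : HasDerivAt (iteratedDeriv n f) (iteratedDeriv (n + 1) f y) y := by
      rw [iteratedDeriv_succ]
      exact (hf.differentiable_iteratedDeriv n (by exact_mod_cast n.lt_succ_self) y).hasDerivAt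
    have hint (y : Fin (n + 1) → ℝ) :
        IntegrableOn (fun s => iteratedDeriv n f (simplexPoint y s)) (cornerSimplex (Fin n)) :=
      ((hf'.continuous_iteratedDeriv n le_rfl).comp (continuous_simplexPoint y)).continuousOn
        |>.integrableOn_compact isCompact_cornerSimplex
    have hcont : Continuous (iteratedDeriv (n + 1) f) := hf.continuous_iteratedDeriv _ le_rfl
    calc divDiff f x
        = (x 1 - x 0)⁻¹ •
            (divDiff f (x ∘ Fin.succ) - divDiff f (x ∘ (1 : Fin (n + 2)).succAbove)) := by
          have hdC : ((x 1 - x 0 : ℝ) : ℂ) ≠ 0 := Complex.ofReal_ne_zero.2 hd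
          rw [divDiff_recurrence f hx, Complex.real_smul, ← mul_assoc, ← Complex.ofReal_sub,
            Complex.ofReal_inv, inv_mul_cancel₀ hdC, one_mul]
      _ = ∫ s in cornerSimplex (Fin n), (x 1 - x 0)⁻¹ •
            (iteratedDeriv n f (simplexPoint (x ∘ Fin.succ) s) -
              iteratedDeriv n f (simplexPoint (x ∘ (1 : Fin (n + 2)).succAbove) s)) := by
          rw [integral_smul, integral_sub (hint _) (hint _),
            ← ih hf' (hx.comp (Fin.succ_injective _)),
            ← ih hf' (hx.comp Fin.succAbove_right_injective)]
      _ = ∫ s in cornerSimplex (Fin n), ∫ a in 0..(1 - ∑ j, s j),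
            iteratedDeriv (n + 1) f (simplexPoint x (Fin.cons a s)) := by
          refine setIntegral_congr_fun measurableSet_cornerSimplex fun s _ => ?_
          simp only [simplexPoint_cons]
          rw [intervalIntegral_comp_add_mul_of_hasDerivAt hderiv hcont hd,
            simplexPoint_succAbove_one_add]
      _ = _ := (setIntegral_cornerSimplex_succ <|
          (hcont.comp (continuous_simplexPoint x)).continuousOn.integrableOn_compact
            isCompact_cornerSimplex).symm

end HermiteGenocchi

theorem stmt2 (n : ℕ) (f : ℝ → ℂ) (hf : ContDiff ℝ n f)
    (w : ℝ → ℂ)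
    (hrep : ∀ x : ℝ, iteratedDeriv n f x = ∫ t : ℝ, w t * Complex.exp (Complex.I * x * t))
    (x : Fin (n + 1) → ℝ) (hx : Function.Injective x) :
    divDiff f x =
      ∫ s in {s : Fin n → ℝ | (∀ j, 0 ≤ s j) ∧ ∑ j, s j ≤ 1},
        ∫ t : ℝ, w t * Complex.exp (Complex.I * t *
          (((1 - ∑ j, s j) * x 0 + ∑ j, s j * x (Fin.succ j) : ℝ) : ℂ)) := by
  rw [divDiff_eq_setIntegral_iteratedDeriv n hf hx]
  refine setIntegral_congr_fun measurableSet_cornerSimplex fun s _ => ?_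
  rw [hrep]
  congr 1 with t
  rw [mul_right_comm]
  rfl
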